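/- Let Z be the operator on L²(𝕋) with Z(z^k) = (2πk/n)z^k and Θ multiplication by θ ∈ [0,2π). Let Π_Θ = M_{1_E} (multiplication by the indicator of the right half circle) and Π_Z the projection onto span{z^k : cos(2πk/n) > 0}. Then for n > 4N, the N×N matrix with entries ⟨[Π_Θ,Π_Z] z^{⌈n/4⌉+l-1}, z^{⌈n/4⌉-k}⟩ for 1 ≤ k,l ≤ N equals the negative of the N-th truncated Hankel matrix (1̂_E(1-k-l))_{1≤k,l≤N}. -/

import Mathlib

/-!
In the Fourier basis `z^p` both projections are explicit: `Π_Z` is diagonal with entries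
`1_E(e^{2πip/n})`, and `Π_Θ`, multiplication by `1_E`, has the Toeplitz matrix
`⟨Π_Θ z^q, z^r⟩ = 1̂_E(r - q)`. Hence
`⟨[Π_Θ, Π_Z] z^q, z^r⟩ = (1_E(e^{2πiq/n}) - 1_E(e^{2πir/n})) 1̂_E(r - q)`.
For `r = ⌈n/4⌉ - k` and `q = ⌈n/4⌉ + l - 1` with `k, l ≤ N < n/4`, the angle `2πr/n` lies
in `[0, π/2)` and `2πq/n` in `[π/2, 3π/2]`, so the prefactor is `-1`, while
`r - q = 1 - k - l`.
-/

open MeasureTheory Real AddCircle ContinuousLinearMap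

noncomputable section

local instance : Fact (0 < 2 * π) := ⟨Real.two_pi_pos⟩

/-- `L²` of the circle (with normalized Haar measure), with orthonormal basis
`{z^k : k ∈ ℤ}` given by `fourierLp 2`. -/
abbrev L2T := Lp ℂ 2 (@haarAddCircle (2 * π) _)

/-- The Fourier coefficients of the indicator of the right half circle
`E = {z ∈ 𝕋 : Re z > 0}`. -/
def hatE (p : ℤ) : ℂ :=
  if p = 0 then (1 / 2 : ℂ) else ((Real.sin (π * p / 2) / (π * p) : ℝ) : ℂ)

open Set

theorem HilbertBasis.inner_apply_of_apply_eq_smul {ι 𝕜 E : Type*} [RCLike 𝕜]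
    [NormedAddCommGroup E] [InnerProductSpace 𝕜 E] (b : HilbertBasis ι 𝕜 E)
    (A : E →L[𝕜] E) (c : ι → 𝕜) (hA : ∀ i, A (b i) = c i • b i) (r : ι) (x : E) :
    inner 𝕜 (b r) (A x) = c r * inner 𝕜 (b r) x := by
  suffices (innerSL 𝕜 (b r)).comp A = c r • innerSL 𝕜 (b r) from congr($this x)
  refine ext_on (Submodule.dense_iff_topologicalClosure_eq_top.2 b.dense_span) ?_
  rintro _ ⟨i, rfl⟩
  obtain rfl | hi := eq_or_ne r i
  · simp [hA]
  · simp [hA, b.orthonormal.inner_eq_zero hi]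

theorem inner_fourierLp_mul_fourierLp {T : ℝ} [Fact (0 < T)] (g : AddCircle T → ℂ)
    (A : Lp ℂ 2 (@haarAddCircle T _) →L[ℂ] Lp ℂ 2 (@haarAddCircle T _))
    (hA : ∀ f, (A f : AddCircle T → ℂ) =ᵐ[haarAddCircle] fun θ => g θ * f θ) (r q : ℤ) :
    inner ℂ (fourierLp 2 r) (A (fourierLp 2 q)) = fourierCoeff g (r - q) := by
  rw [L2.inner_def, fourierCoeff]
  refine integral_congr_ae ?_
  filter_upwards [coeFn_fourierLp 2 r, coeFn_fourierLp 2 q, hA (fourierLp 2 q)]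
    with θ hr hq hA
  rw [hr, hA, hq, RCLike.inner_apply, ← fourier_neg, smul_eq_mul, neg_sub, sub_eq_add_neg,
    fourier_add]
  ring

theorem intervalIntegral_indicator_Ioo {E : Type*} [NormedAddCommGroup E]
    [NormedSpace ℝ E] {a b c d : ℝ} (hac : a ≤ c) (hcd : c ≤ d) (hdb : d ≤ b) (f : ℝ → E) :
    ∫ x in a..b, (Ioo c d).indicator f x = ∫ x in c..d, f x := by
  rw [intervalIntegral.integral_of_le (hac.trans (hcd.trans hdb)),
    intervalIntegral.integral_of_le hcd, integral_indicator measurableSet_Ioo,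
    Measure.restrict_restrict measurableSet_Ioo,
    inter_eq_left.2 (Ioo_subset_Ioc_self.trans (Ioc_subset_Ioc hac hdb)),
    integral_Ioc_eq_integral_Ioo]

theorem fourier_coe_two_pi (p : ℤ) (x : ℝ) :
    fourier p (x : AddCircle (2 * π)) = Complex.exp (p * x * Complex.I) := by
  rw [fourier_coe_apply]
  congr 1
  field_simp
  push_cast
  ring

theorem cos_two_pi_mul_div_pos {x m : ℝ} (h0 : 0 ≤ x) (h : 4 * x < m) :
    0 < cos (2 * π * x / m) := by
  have hm : 0 < m := by linarith
  refine cos_pos_of_mem_Ioo ⟨?_, ?_⟩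
  · have : 0 ≤ 2 * π * x / m := by positivity
    linarith [pi_pos]
  · rw [div_lt_iff₀ hm]
    nlinarith [pi_pos]

theorem cos_two_pi_mul_div_nonpos {x m : ℝ} (hm : 0 < m) (h1 : m ≤ 4 * x)
    (h2 : 4 * x ≤ 3 * m) :
    cos (2 * π * x / m) ≤ 0 := by
  apply cos_nonpos_of_pi_div_two_le_of_le
  · rw [le_div_iff₀ hm]
    nlinarith [pi_pos]
  · rw [div_le_iff₀ hm]
    nlinarith [pi_pos]

def rightHalf : Set (AddCircle (2 * π)) := {θ | 0 < (fourier 1 θ).re}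

theorem coe_mem_rightHalf_iff {x : ℝ} (hx : x ∈ Icc (-π) π) :
    (x : AddCircle (2 * π)) ∈ rightHalf ↔ x ∈ Ioo (-(π / 2)) (π / 2) := by
  rw [rightHalf, mem_ofPred_eq, fourier_coe_two_pi, Int.cast_one, one_mul,
    Complex.exp_ofReal_mul_I_re]
  refine ⟨fun h => ?_, cos_pos_of_mem_Ioo⟩
  by_contra hout
  rcases not_and_or.1 hout with hlow | hhigh
  · have : cos (-x) ≤ 0 := cos_nonpos_of_pi_div_two_le_of_le (by linarith [not_lt.1 hlow])
      (by linarith [hx.1, pi_pos])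
    rw [cos_neg] at this
    linarith
  · exact (cos_nonpos_of_pi_div_two_le_of_le (not_lt.1 hhigh) (by linarith [hx.2])).not_gt h

theorem intervalIntegral_fourier_neg_eq_hatE (p : ℤ) :
    ∫ x in -(π / 2)..π / 2, fourier (-p) (x : AddCircle (2 * π)) = 2 * π * hatE p := by
  simp_rw [fourier_coe_two_pi]
  obtain rfl | hp := eq_or_ne p 0
  · simp [hatE]
    ring
  have hc : -(p : ℂ) * Complex.I ≠ 0 := by simpa using hp
  have hπ : (π : ℂ) ≠ 0 := by exact_mod_cast pi_ne_zero
  simp_rw [Int.cast_neg, mul_right_comm _ _ Complex.I]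
  rw [integral_exp_mul_complex hc, hatE, if_neg hp]
  push_cast
  rw [Complex.sin]
  field_simp
  ring_nf
  rw [Complex.I_sq]
  ring

theorem fourierCoeff_indicator_rightHalf (p : ℤ) :
    fourierCoeff (rightHalf.indicator fun _ => (1 : ℂ)) p = hatE p := by
  have hπ : 0 < π := pi_pos
  have hrestrict : EqOn
      (fun x : ℝ => fourier (-p) (x : AddCircle (2 * π)) • rightHalf.indicator (fun _ => 1) x)
      ((Ioo (-(π / 2)) (π / 2)).indicator fun x => fourier (-p) (x : AddCircle (2 * π)))
      (uIcc (-π) π) := by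
    intro x hx
    rw [uIcc_of_le (by linarith)] at hx
    beta_reduce
    by_cases h : x ∈ Ioo (-(π / 2)) (π / 2)
    · rw [indicator_of_mem h, indicator_of_mem ((coe_mem_rightHalf_iff hx).2 h), smul_eq_mul,
        mul_one]
    · rw [indicator_of_notMem h, indicator_of_notMem (mt (coe_mem_rightHalf_iff hx).1 h),
        smul_zero]
  rw [fourierCoeff_eq_intervalIntegral _ p (-π), show -π + 2 * π = π by ring,
    intervalIntegral.integral_congr hrestrict,
    intervalIntegral_indicator_Ioo (by linarith) (by linarith) (by linarith),
    intervalIntegral_fourier_neg_eq_hatE, Complex.real_smul]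
  push_cast
  field_simp

/-- Let `Π_Θ` be multiplication by the indicator of the right half circle `E`, and let
`Π_Z` be the projection onto `span{z^p : cos(2πp/n) > 0}`.  For `n > 4N` and
`1 ≤ k, l ≤ N`, the matrix entry
`⟨[Π_Θ, Π_Z] z^{⌈n/4⌉+l-1}, z^{⌈n/4⌉-k}⟩` equals `-1̂_E(1-k-l)`, i.e. the `N × N` matrix
of these entries is the negative of the `N`-th truncated Hankel matrix of `1_E`. -/
theorem commutator_matrix_entries_eq_neg_hankel
    (n N : ℕ) (hn : 4 * N < n)
    (PTheta : L2T →L[ℂ] L2T)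
    (hPTheta : ∀ f : L2T,
      (PTheta f : AddCircle (2 * π) → ℂ) =ᵐ[haarAddCircle]
        fun θ => Set.indicator {θ : AddCircle (2 * π) | 0 < (fourier 1 θ).re}
          (fun _ => (1 : ℂ)) θ * f θ)
    (PZ : L2T →L[ℂ] L2T)
    (hPZ : ∀ p : ℤ,
      PZ (fourierLp 2 p) =
        (if 0 < Real.cos (2 * π * p / n) then (1 : ℂ) else 0) • fourierLp 2 p)
    (k l : ℕ) (hk1 : 1 ≤ k) (hkN : k ≤ N) (hl1 : 1 ≤ l) (hlN : l ≤ N) :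
    inner (𝕜 := ℂ) (fourierLp 2 (((n + 3) / 4 : ℕ) - (k : ℤ)))
        ((PTheta ∘L PZ - PZ ∘L PTheta) (fourierLp 2 (((n + 3) / 4 : ℕ) + (l : ℤ) - 1))) =
      -hatE (1 - k - l) := by
  set M : ℤ := (((n + 3) / 4 : ℕ) : ℤ)
  have hn0 : (0 : ℝ) < n := by exact_mod_cast (show 0 < n by omega)
  have hcos_r : 0 < cos (2 * π * ((M - k : ℤ) : ℝ) / n) :=
    cos_two_pi_mul_div_pos (by exact_mod_cast (show 0 ≤ M - k by omega))
      (by exact_mod_cast (show 4 * (M - k) < n by omega))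
  have hcos_q : cos (2 * π * ((M + l - 1 : ℤ) : ℝ) / n) ≤ 0 :=
    cos_two_pi_mul_div_nonpos hn0 (by exact_mod_cast (show n ≤ 4 * (M + l - 1) by omega))
      (by exact_mod_cast (show 4 * (M + l - 1) ≤ 3 * n by omega))
  have hPZ_diag := fourierBasis.inner_apply_of_apply_eq_smul PZ _
    (fun i => by rw [coe_fourierBasis]; exact hPZ i) (M - k)
  rw [coe_fourierBasis] at hPZ_diag
  rw [sub_apply, comp_apply, comp_apply, hPZ, if_neg hcos_q.not_gt, zero_smul, map_zero,
    zero_sub, inner_neg_right, hPZ_diag, if_pos hcos_r, one_mul,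
    inner_fourierLp_mul_fourierLp (rightHalf.indicator fun _ => 1) PTheta hPTheta,
    fourierCoeff_indicator_rightHalf]
  congr 2
  ring
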